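/- arXiv:1202.0039 — 6 statements merged into one kernel-verified Lean document; each statement's English description precedes it below -/
import Mathlib

section
/- For all natural numbers n and c, the following identity of rational numbers holds: ∑_{k=1}^{n} (-1)^{k+1} (1/k) · C(n, c+k) = ∑_{k=1}^{n} (1/k) · C(n-k, c), where C(a,b) denotes the binomial coefficient with C(a,b) = 0 when b > a. -/
/-!
Both sides satisfy Pascal's recurrence `F (n + 1) (c + 1) = F n (c + 1) + F n c`, and both grow
by `1 / (n + 1)` when `n` increases at `c = 0` (both are the harmonic number `H_n` there). Since
they agree at `n = 0`, they agree everywhere.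
-/

open Finset

theorem Finset.sum_Icc_one_neg_one_pow_succ_mul_choose {R : Type*} [CommRing R] {n : ℕ}
    (hn : n ≠ 0) : ∑ k ∈ Icc 1 n, (-1 : R) ^ (k + 1) * n.choose k = 1 := by
  have hzero : ∑ k ∈ range (n + 1), (-1 : R) ^ k * n.choose k = 0 := by
    simpa using congrArg (Int.cast : ℤ → R) (Int.alternating_sum_range_choose_of_ne hn)
  rw [range_eq_Ico, sum_eq_sum_Ico_succ_bot (Nat.zero_lt_succ n), zero_add, Nat.succ_eq_add_one,
    Ico_add_one_right_eq_Icc] at hzero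
  simp only [pow_succ, mul_neg_one, neg_mul, sum_neg_distrib]
  simp only [pow_zero, Nat.choose_zero_right, Nat.cast_one, mul_one] at hzero
  linear_combination -hzero

theorem Nat.inv_mul_choose_pred {K : Type*} [Field K] [CharZero K] (n : ℕ) {k : ℕ} (hk : 0 < k) :
    (1 / k : K) * n.choose (k - 1) = (n + 1).choose k / (n + 1) := by
  have h := Nat.add_one_mul_choose_eq n (k - 1)
  rw [Nat.sub_add_cancel hk] at h
  have h' : ((n : K) + 1) * n.choose (k - 1) = (n + 1).choose k * k := by exact_mod_cast h
  have hk' : (k : K) ≠ 0 := Nat.cast_ne_zero.mpr hk.ne'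
  field_simp
  linear_combination h'

theorem Finset.sum_Icc_one_neg_one_pow_succ_div_mul_choose_pred {K : Type*} [Field K] [CharZero K]
    (n : ℕ) :
    ∑ k ∈ Icc 1 (n + 1), (-1 : K) ^ (k + 1) * (1 / k) * n.choose (k - 1) = 1 / (n + 1) := by
  calc ∑ k ∈ Icc 1 (n + 1), (-1 : K) ^ (k + 1) * (1 / k) * n.choose (k - 1)
      = 1 / (n + 1) * ∑ k ∈ Icc 1 (n + 1), (-1 : K) ^ (k + 1) * (n + 1).choose k := by
        rw [mul_sum]
        refine sum_congr rfl fun k hk => ?_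
        rw [mul_assoc, Nat.inv_mul_choose_pred n (mem_Icc.mp hk).1]
        ring
    _ = 1 / (n + 1) := by
        rw [sum_Icc_one_neg_one_pow_succ_mul_choose n.succ_ne_zero, mul_one]

namespace EulerLog

def lhs (n c : ℕ) : ℚ := ∑ k ∈ Icc 1 n, (-1 : ℚ) ^ (k + 1) * (1 / k) * n.choose (c + k)

def rhs (n c : ℕ) : ℚ := ∑ k ∈ Icc 1 n, (1 / k : ℚ) * (n - k).choose c

@[simp] theorem lhs_zero (c : ℕ) : lhs 0 c = 0 := by simp [lhs]

@[simp] theorem rhs_zero (c : ℕ) : rhs 0 c = 0 := by simp [rhs]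

theorem lhs_succ_succ (n c : ℕ) : lhs (n + 1) (c + 1) = lhs n (c + 1) + lhs n c := by
  have top (d : ℕ) : n.choose (d + (n + 1)) = 0 := Nat.choose_eq_zero_of_lt (by omega)
  have pascal (k : ℕ) : (n + 1).choose (c + 1 + k) = n.choose (c + 1 + k) + n.choose (c + k) := by
    rw [show c + 1 + k = c + k + 1 by omega, Nat.choose_succ_succ', add_comm]
  simp only [lhs, pascal, Nat.cast_add, mul_add, sum_add_distrib]
  rw [sum_Icc_succ_top (by omega), sum_Icc_succ_top (by omega), top, top]
  simp

theorem lhs_succ_zero (n : ℕ) : lhs (n + 1) 0 = lhs n 0 + 1 / (n + 1) := by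
  have pascal : ∀ k ∈ Icc 1 (n + 1), ((n + 1).choose k : ℚ) = n.choose k + n.choose (k - 1) := by
    intro k hk
    rw [Nat.choose_succ_left n k (mem_Icc.mp hk).1, add_comm, Nat.cast_add]
  simp only [lhs, zero_add]
  rw [sum_congr rfl fun k hk => by rw [pascal k hk, mul_add], sum_add_distrib,
    sum_Icc_one_neg_one_pow_succ_div_mul_choose_pred, sum_Icc_succ_top (by omega),
    Nat.choose_succ_self]
  simp

theorem rhs_succ_succ (n c : ℕ) : rhs (n + 1) (c + 1) = rhs n (c + 1) + rhs n c := by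
  have pascal : ∀ k ∈ Icc 1 n, (n + 1 - k).choose (c + 1) =
      (n - k).choose (c + 1) + (n - k).choose c := by
    intro k hk
    rw [show n + 1 - k = n - k + 1 by have := (mem_Icc.mp hk).2; omega, Nat.choose_succ_succ',
      add_comm]
  rw [rhs, sum_Icc_succ_top (by omega), sum_congr rfl fun k hk => by rw [pascal k hk],
    Nat.sub_self, Nat.choose_zero_succ]
  simp only [Nat.cast_add, mul_add, sum_add_distrib, rhs]
  simp

theorem rhs_succ_zero (n : ℕ) : rhs (n + 1) 0 = rhs n 0 + 1 / (n + 1) := by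
  simp [rhs, sum_Icc_succ_top]

end EulerLog

open EulerLog in
theorem euler_log_identity (n c : ℕ) :
    ∑ k ∈ Finset.Icc 1 n, (-1 : ℚ) ^ (k + 1) * (1 / k) * (n.choose (c + k)) =
      ∑ k ∈ Finset.Icc 1 n, (1 / k : ℚ) * ((n - k).choose c) := by
  change lhs n c = rhs n c
  induction n generalizing c with
  | zero => simp
  | succ n ih =>
    cases c with
    | zero => rw [lhs_succ_zero, rhs_succ_zero, ih]
    | succ c => rw [lhs_succ_succ, rhs_succ_succ, ih, ih]
end

section
/- For every natural number n ≥ 1, ∑_{k=1}^{n} (-1)^{k+1} (1/k) · C(n, k) = ∑_{k=1}^{n} 1/k, i.e. the alternating sum of binomial coefficients C(n,k) divided by k equals the n-th harmonic number. -/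
/-!
Induction on `n`. Pascal's rule splits the sum for `n + 1` into the sum for `n` and a sum
involving `C(n, k - 1) / k = C(n + 1, k) / (n + 1)`; the latter is `1 / (n + 1)` times the
alternating sum `∑_{k ≥ 1} (-1)^(k+1) C(n + 1, k) = 1`, so each step adds `1 / (n + 1)`.
-/

open Finset

theorem sum_Icc_one_neg_one_pow_mul_choose {R : Type*} [Ring R] {n : ℕ} (hn : n ≠ 0) :
    ∑ k ∈ Icc 1 n, (-1 : R) ^ (k + 1) * n.choose k = 1 := by
  have h := congrArg (Int.cast : ℤ → R) (Int.alternating_sum_range_choose_of_ne hn)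
  push_cast at h
  rw [range_eq_Ico, sum_eq_sum_Ico_succ_bot n.succ_pos, zero_add, Nat.succ_eq_add_one,
    Ico_add_one_right_eq_Icc] at h
  simp only [pow_succ, mul_neg_one, neg_mul, sum_neg_distrib]
  simpa [add_eq_zero_iff_neg_eq'] using h

variable {K : Type*} [Field K] [CharZero K]

theorem one_div_mul_choose_pred {n k : ℕ} (hk : 0 < k) :
    (1 / k : K) * n.choose (k - 1) = 1 / (n + 1) * (n + 1).choose k := by
  obtain ⟨j, rfl⟩ := Nat.exists_eq_add_of_le' hk
  have h : ((n + 1) * n.choose j : K) = (n + 1).choose (j + 1) * (j + 1) := by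
    exact_mod_cast Nat.add_one_mul_choose_eq n j
  push_cast
  field_simp
  linear_combination h

theorem sum_Icc_one_neg_one_pow_div_mul_choose_succ (n : ℕ) :
    ∑ k ∈ Icc 1 (n + 1), (-1 : K) ^ (k + 1) * (1 / k) * (n + 1).choose k =
      ∑ k ∈ Icc 1 n, (-1 : K) ^ (k + 1) * (1 / k) * n.choose k + 1 / (n + 1) := by
  have pascal : ∀ k ∈ Icc 1 (n + 1),
      (-1 : K) ^ (k + 1) * (1 / k) * (n + 1).choose k =
        (-1 : K) ^ (k + 1) * (1 / k) * n.choose k +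
          1 / (n + 1) * ((-1 : K) ^ (k + 1) * (n + 1).choose k) := by
    intro k hk
    have hk1 := (mem_Icc.1 hk).1
    have hpascal : ((n + 1).choose k : K) = n.choose (k - 1) + n.choose k := by
      exact_mod_cast Nat.choose_succ_left n k hk1
    linear_combination (-1 : K) ^ (k + 1) * (1 / k) * hpascal +
      (-1 : K) ^ (k + 1) * one_div_mul_choose_pred (K := K) (n := n) hk1
  rw [sum_congr rfl pascal, sum_add_distrib, ← mul_sum,
    sum_Icc_one_neg_one_pow_mul_choose n.succ_ne_zero, mul_one,
    sum_Icc_succ_top (by omega : 1 ≤ n + 1), Nat.choose_succ_self]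
  simp

theorem sum_Icc_one_neg_one_pow_div_mul_choose (n : ℕ) :
    ∑ k ∈ Icc 1 n, (-1 : K) ^ (k + 1) * (1 / k) * n.choose k = ∑ k ∈ Icc 1 n, (1 / k : K) := by
  induction n with
  | zero => rfl
  | succ n ih =>
    rw [sum_Icc_one_neg_one_pow_div_mul_choose_succ, ih, sum_Icc_succ_top (by omega)]
    push_cast
    rfl

theorem euler_case1_general (n : ℕ) :
    ∑ k ∈ Finset.Icc 1 n, (-1 : ℚ) ^ (k + 1) * (1 / k) * (n.choose k) =
      ∑ k ∈ Finset.Icc 1 n, (1 / k : ℚ) :=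
  sum_Icc_one_neg_one_pow_div_mul_choose n

theorem euler_case1 (n : ℕ) (hn : 1 ≤ n) :
    ∑ k ∈ Finset.Icc 1 n, (-1 : ℚ) ^ (k + 1) * (1 / k) * (n.choose k) =
      ∑ k ∈ Finset.Icc 1 n, (1 / k : ℚ) :=
  euler_case1_general n
end

section
/- For every natural number n ≥ 1, ∑_{k=1}^{n-1} (-1)^{k+1} (1/k) · C(n, k+1) = ∑_{k=1}^{n-1} (n/k - 1), as rational numbers. -/
/-!
Pascal's rule `C(n+2, k+1) = C(n+1, k) + C(n+1, k+1)` shows that, as `n` grows by one, the left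
side grows by `∑_{k=1}^{n+1} (-1)^(k+1) C(n+1, k) / k`, which is the harmonic number `H_{n+1}`
(the same induction, driven by `∑_{k ≥ 1} (-1)^(k+1) C(n, k) = 1`). Hence the left side is
`n H_{n-1} - (n - 1)`, and so is the right side.
-/

open Finset

theorem sum_Icc_neg_one_pow_succ_mul_choose {R : Type*} [CommRing R] {m : ℕ} (hm : m ≠ 0) :
    ∑ k ∈ Icc 1 m, (-1 : R) ^ (k + 1) * m.choose k = 1 := by
  have h := congrArg (Int.cast : ℤ → R) (Int.alternating_sum_range_choose_of_ne hm)
  push_cast at h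
  rw [range_eq_Ico, sum_eq_sum_Ico_succ_bot (by omega), Ico_add_one_right_eq_Icc] at h
  simp only [pow_zero, Nat.choose_zero_right, Nat.cast_one, one_mul] at h
  simp only [pow_succ, mul_neg_one, neg_mul, sum_neg_distrib]
  linear_combination -h

theorem mul_choose_succ_eq_mul_sub_choose {R : Type*} [CommRing R] (n k : ℕ) :
    (k : R) * (n + 1).choose k = (n + 1) * ((n + 1).choose k - n.choose k) := by
  cases k with
  | zero => simp
  | succ j =>
    have h := congrArg (Nat.cast : ℕ → R) (Nat.add_one_mul_choose_eq n j)
    rw [Nat.choose_succ_succ' n j] at h ⊢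
    push_cast at h ⊢
    linear_combination -h

theorem sum_Icc_neg_one_pow_succ_mul_choose_div (n : ℕ) :
    ∑ k ∈ Icc 1 n, (-1 : ℚ) ^ (k + 1) * n.choose k / k = harmonic n := by
  induction n with
  | zero => simp
  | succ n ih =>
    have hsplit : ∀ k ∈ Icc 1 (n + 1), (-1 : ℚ) ^ (k + 1) * (n + 1).choose k / k =
        (-1 : ℚ) ^ (k + 1) * n.choose k / k + (-1 : ℚ) ^ (k + 1) * (n + 1).choose k / (n + 1) := by
      intro k hk
      have hk0 : (k : ℚ) ≠ 0 := Nat.cast_ne_zero.mpr (by grind)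
      field_simp
      linear_combination -mul_choose_succ_eq_mul_sub_choose (R := ℚ) n k
    rw [sum_congr rfl hsplit, sum_add_distrib, sum_Icc_succ_top (by omega), ih, ← sum_div,
      sum_Icc_neg_one_pow_succ_mul_choose (by omega), harmonic_succ]
    simp

theorem sum_Icc_div_sub_one (n : ℕ) (x : ℚ) :
    ∑ k ∈ Icc 1 n, (x / k - 1) = x * harmonic n - n := by
  simp [sum_sub_distrib, div_eq_mul_inv, ← mul_sum, harmonic_eq_sum_Icc]

theorem sum_Icc_neg_one_pow_mul_choose_succ (n : ℕ) :
    ∑ k ∈ Icc 1 n, (-1 : ℚ) ^ (k + 1) * (1 / k) * (n + 1).choose (k + 1) =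
      (n + 1) * harmonic n - n := by
  induction n with
  | zero => simp
  | succ n ih =>
    have hpascal : ∀ k ∈ Icc 1 (n + 1), (-1 : ℚ) ^ (k + 1) * (1 / k) * (n + 2).choose (k + 1) =
        (-1 : ℚ) ^ (k + 1) * (n + 1).choose k / k +
          (-1 : ℚ) ^ (k + 1) * (1 / k) * (n + 1).choose (k + 1) := by
      intro k _
      rw [Nat.choose_succ_succ']
      push_cast
      ring
    rw [sum_congr rfl hpascal, sum_add_distrib, sum_Icc_neg_one_pow_succ_mul_choose_div,
      sum_Icc_succ_top (by omega), ih, Nat.choose_succ_self, harmonic_succ]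
    push_cast
    field_simp
    ring

theorem euler_case2_general (n : ℕ) :
    ∑ k ∈ Finset.Icc 1 (n - 1), (-1 : ℚ) ^ (k + 1) * (1 / k) * (n.choose (k + 1)) =
      ∑ k ∈ Finset.Icc 1 (n - 1), ((n : ℚ) / k - 1) := by
  cases n with
  | zero => simp
  | succ m =>
    rw [Nat.add_sub_cancel, sum_Icc_div_sub_one, sum_Icc_neg_one_pow_mul_choose_succ]
    push_cast
    ring

theorem euler_case2 (n : ℕ) (hn : 1 ≤ n) :
    ∑ k ∈ Finset.Icc 1 (n - 1), (-1 : ℚ) ^ (k + 1) * (1 / k) * (n.choose (k + 1)) =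
      ∑ k ∈ Finset.Icc 1 (n - 1), ((n : ℚ) / k - 1) :=
  euler_case2_general n
end

section
/- For every natural number n, ∑_{k=0}^{n} (-1)^{k} (1/(k+2)) · C(n, k) = 1/((n+1)(n+2)), as rational numbers. -/
/-!
Put `S(n, m) = ∑ₖ (-1)^k C(n,k) / (k + m + 1)`. Pascal's rule `C(n+1,k+1) = C(n,k) + C(n,k+1)`
gives `S(n+1, m) = S(n, m) - S(n, m+1)`, and the Beta value `n! m! / (n+m+1)!` satisfies the
same recurrence with the same initial values `S(0, m) = 1/(m+1)`. The theorem is the case `m = 1`.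
-/

open Finset Nat

section
variable (K : Type*) [Field K] [CharZero K]

def alternatingChooseSum (n m : ℕ) : K :=
  ∑ k ∈ range (n + 1), (-1 : K) ^ k * n.choose k / (k + m + 1)

theorem alternatingChooseSum_succ (n m : ℕ) :
    alternatingChooseSum K (n + 1) m =
      alternatingChooseSum K n m - alternatingChooseSum K n (m + 1) := by
  unfold alternatingChooseSum
  have pascal : ∑ k ∈ range (n + 1),
        (-1 : K) ^ (k + 1) * (n + 1).choose (k + 1) / ((k + 1 : ℕ) + m + 1) =
      -∑ k ∈ range (n + 1), (-1 : K) ^ k * n.choose k / (k + (m + 1 : ℕ) + 1) +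
        ∑ k ∈ range (n + 1), (-1 : K) ^ (k + 1) * n.choose (k + 1) / ((k + 1 : ℕ) + m + 1) := by
    rw [← sum_neg_distrib, ← sum_add_distrib]
    refine sum_congr rfl fun k _ => ?_
    rw [choose_succ_succ]
    push_cast
    ring
  have shifted : ∑ k ∈ range (n + 1), (-1 : K) ^ k * n.choose k / (k + m + 1) =
      ∑ k ∈ range (n + 1), (-1 : K) ^ (k + 1) * n.choose (k + 1) / ((k + 1 : ℕ) + m + 1) +
        1 / (m + 1) :=
    calc _ = ∑ k ∈ range (n + 2), (-1 : K) ^ k * n.choose k / (k + m + 1) := by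
          simp [sum_range_succ _ (n + 1)]
      _ = _ := by simp [sum_range_succ']
  rw [sum_range_succ', pascal, shifted]
  simp only [cast_zero, zero_add, pow_zero, choose_zero_right, cast_one, one_mul]
  ring

theorem alternatingChooseSum_eq (n m : ℕ) :
    alternatingChooseSum K n m = n ! * m ! / (n + m + 1)! := by
  induction n generalizing m with
  | zero =>
    have : (m ! : K) ≠ 0 := mod_cast factorial_ne_zero m
    simp [alternatingChooseSum, factorial_succ, field]
  | succ n ih =>
    rw [alternatingChooseSum_succ, ih, ih, show n + (m + 1) + 1 = n + m + 1 + 1 by ring,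
      show n + 1 + m + 1 = n + m + 1 + 1 by ring]
    have : ((n + m + 1)! : K) ≠ 0 := mod_cast factorial_ne_zero _
    have : (n + m + 1 + 1 : K) ≠ 0 := mod_cast succ_ne_zero (n + m + 1)
    rw [factorial_succ (n + m + 1), factorial_succ n, factorial_succ m]
    push_cast
    field_simp
    ring

end

theorem euler_case5 (n : ℕ) :
    ∑ k ∈ Finset.range (n + 1), (-1 : ℚ) ^ k * (1 / (k + 2)) * (n.choose k) =
      1 / ((n + 1) * (n + 2)) := by
  calc _ = alternatingChooseSum ℚ n 1 :=
        sum_congr rfl fun k _ => by push_cast; ring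
    _ = n ! * 1 ! / (n + 1 + 1)! := alternatingChooseSum_eq ℚ n 1
    _ = 1 / ((n + 1) * (n + 2)) := by
        rw [factorial_succ (n + 1), factorial_succ n]
        push_cast
        field_simp
        ring
end

section
/- For every natural number n, ∑_{k=0}^{n} (-1)^{k} (1/(k+3)) · C(n, k) = 2/((n+1)(n+2)(n+3)), as rational numbers. -/
/-!
Put `S n a = ∑ₖ (-1)ᵏ C(n, k) / (a + k)`. Pascal's rule gives `S (n + 1) a = S n a - S n (a + 1)`,
and `n! / (a (a + 1) ⋯ (a + n))` satisfies the same recursion, so the two agree for all `n`.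
At `a = 3` the product `3 ⋅ 4 ⋯ (n + 3)` is `(n + 3)! / 2`.
-/

open Finset Nat

section AlternatingChooseDiv

variable {K : Type*} [Field K]

theorem sum_range_succ_alternating_choose_div (n : ℕ) (a : K) :
    ∑ k ∈ range (n + 2), (-1) ^ k * ((n + 1).choose k : K) / (a + k) =
      ∑ k ∈ range (n + 1), (-1) ^ k * (n.choose k : K) / (a + k) -
        ∑ k ∈ range (n + 1), (-1) ^ k * (n.choose k : K) / (a + 1 + k) := by
  have pascal : ∀ k ∈ range (n + 1),
      (-1) ^ (k + 1) * ((n + 1).choose (k + 1) : K) / (a + (k + 1 : ℕ)) =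
        (-1) ^ (k + 1) * (n.choose (k + 1) : K) / (a + (k + 1 : ℕ)) -
          (-1) ^ k * (n.choose k : K) / (a + 1 + k) := by
    intro k _
    rw [choose_succ_succ]
    push_cast
    ring
  rw [sum_range_succ', sum_congr rfl pascal, sum_sub_distrib, sum_range_succ _ n,
    choose_succ_self]
  conv_rhs => rw [sum_range_succ']
  simp only [cast_add, cast_one, cast_zero, mul_zero, zero_div, add_zero, pow_zero,
    choose_zero_right, mul_one, one_div]
  ring

theorem sum_range_alternating_choose_div (n : ℕ) (a : K) (ha : ∀ i ≤ n, a + i ≠ 0) :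
    ∑ k ∈ range (n + 1), (-1) ^ k * (n.choose k : K) / (a + k) =
      n ! / ∏ i ∈ range (n + 1), (a + i) := by
  induction n generalizing a with
  | zero => simp
  | succ n ih =>
    have ha_succ : ∀ i ≤ n, a + 1 + i ≠ 0 := fun i hi => by
      have := ha (i + 1) (by omega)
      push_cast at this
      rwa [add_right_comm, add_assoc]
    have hP : ∏ i ∈ range (n + 1), (a + i) ≠ 0 :=
      prod_ne_zero_iff.2 fun i hi => ha i (by grind)
    have hP_succ : ∏ i ∈ range (n + 1), (a + 1 + i) ≠ 0 :=
      prod_ne_zero_iff.2 fun i hi => ha_succ i (by grind)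
    rw [sum_range_succ_alternating_choose_div, ih a fun i hi => ha i (by omega),
      ih (a + 1) ha_succ]
    have hprod_succ :
        ∏ i ∈ range (n + 2), (a + i) = (∏ i ∈ range (n + 1), (a + i)) * (a + (n + 1)) := by
      rw [prod_range_succ]; push_cast; ring
    have hprod_succ' : ∏ i ∈ range (n + 2), (a + i) = a * ∏ i ∈ range (n + 1), (a + 1 + i) := by
      rw [prod_range_succ', mul_comm]; push_cast; ring_nf
    have hlast_ne : a + (n + 1) ≠ 0 := by exact_mod_cast ha (n + 1) le_rfl
    rw [hprod_succ, factorial_succ]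
    field_simp
    push_cast
    linear_combination (-(n ! : K)) * hprod_succ.symm.trans hprod_succ'

end AlternatingChooseDiv

theorem euler_case6 (n : ℕ) :
    ∑ k ∈ Finset.range (n + 1), (-1 : ℚ) ^ k * (1 / (k + 3)) * (n.choose k) =
      2 / ((n + 1) * (n + 2) * (n + 3)) := by
  have hprod : 2 * ∏ i ∈ range (n + 1), ((3 : ℚ) + i) = (n + 3)! := by
    have := factorial_mul_ascFactorial 2 (n + 1)
    rw [ascFactorial_eq_prod_range, factorial_two, show 2 + (n + 1) = n + 3 by omega] at this
    exact_mod_cast this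
  have hfact : ((n + 3)! : ℚ) = (n + 1) * (n + 2) * (n + 3) * n ! := by
    push_cast [factorial_succ]
    ring
  have hsum := sum_range_alternating_choose_div n (3 : ℚ) fun i _ => by positivity
  calc ∑ k ∈ range (n + 1), (-1 : ℚ) ^ k * (1 / (k + 3)) * (n.choose k)
      = ∑ k ∈ range (n + 1), (-1 : ℚ) ^ k * (n.choose k) / (3 + k) := by
        refine sum_congr rfl fun k _ => ?_
        ring
    _ = 2 / ((n + 1) * (n + 2) * (n + 3)) := by
        rw [hsum, ← mul_div_mul_left _ _ two_ne_zero, hprod, hfact]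
        field_simp
end

section
/- For every natural number n, ∑_{k=0}^{n} (-1)^{k} (1/(k+4)) · C(n, k) = 6/((n+1)(n+2)(n+3)(n+4)), as rational numbers. -/
/-!
Both sides are the Beta integral `∫₀¹ x^(a-1) (1-x)^n dx` at `a = 4`. Without integrals: by
Pascal's rule the alternating sum `S(n, a) = ∑ (-1)^k C(n,k) / (a+k)` satisfies
`S(n+1, a) = S(n, a) - S(n, a+1)`, and `n! / (a (a+1) ⋯ (a+n))` satisfies the same recurrence.
-/

open Finset Nat

theorem sum_range_neg_one_pow_mul_choose_div {K : Type*} [Field K] (n : ℕ) (a : K)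
    (ha : ∀ k ≤ n, a + k ≠ 0) :
    ∑ k ∈ range (n + 1), (-1) ^ k * (n.choose k : K) / (a + k) =
      n ! / ∏ i ∈ range (n + 1), (a + i) := by
  induction n generalizing a with
  | zero => simp
  | succ n ih =>
    have hshift (k : ℕ) : a + 1 + k = a + (k + 1 : ℕ) := by push_cast; ring
    have hpascal :
        ∑ k ∈ range (n + 2), (-1) ^ k * ((n + 1).choose k : K) / (a + k) =
          ∑ k ∈ range (n + 1), (-1) ^ k * (n.choose k : K) / (a + k) -
            ∑ k ∈ range (n + 1), (-1) ^ k * (n.choose k : K) / (a + 1 + k) := by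
      simp only [mul_div_assoc, mul_comm ((-1 : K) ^ _),
        sum_choose_succ_mul (fun k _ ↦ (-1 : K) ^ k / (a + k)), sub_eq_add_neg, ← sum_neg_distrib]
      congr 1
      refine sum_congr rfl fun k _ ↦ ?_
      push_cast
      ring
    have hfirst : n ! / ∏ i ∈ range (n + 1), (a + i) =
        n ! * (a + (n + 1 : ℕ)) / ∏ i ∈ range (n + 2), (a + i) := by
      rw [prod_range_succ _ (n + 1), mul_div_mul_right _ _ (ha (n + 1) le_rfl)]
    have hsecond : n ! / ∏ i ∈ range (n + 1), (a + 1 + i) =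
        n ! * a / ∏ i ∈ range (n + 2), (a + i) := by
      have ha₀ : a ≠ 0 := by simpa using ha 0 (Nat.zero_le _)
      rw [prod_range_succ' (fun i : ℕ ↦ a + i), cast_zero, add_zero, mul_div_mul_right _ _ ha₀]
      simp only [hshift]
    rw [hpascal, ih a fun k hk ↦ ha k (by omega),
      ih (a + 1) fun k hk ↦ hshift k ▸ ha (k + 1) (by omega), hfirst, hsecond, ← sub_div,
      factorial_succ]
    push_cast
    ring

theorem sum_range_neg_one_pow_mul_choose_div_nat_add_one {K : Type*} [Field K] [CharZero K]
    (n m : ℕ) :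
    ∑ k ∈ range (n + 1), (-1) ^ k * (n.choose k : K) / (m + 1 + k) =
      n ! * m ! / (n + m + 1)! := by
  have hprod : m ! * ∏ i ∈ range (n + 1), (m + 1 + i) = (n + m + 1)! := by
    rw [← ascFactorial_eq_prod_range, factorial_mul_ascFactorial, add_comm m, add_right_comm]
  have hm : (m ! : K) ≠ 0 := cast_ne_zero.2 m.factorial_ne_zero
  rw [sum_range_neg_one_pow_mul_choose_div n _ fun k _ ↦ by norm_cast; omega, ← hprod]
  push_cast
  rw [mul_comm (m ! : K), mul_div_mul_right _ _ hm]

theorem euler_case7 (n : ℕ) :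
    ∑ k ∈ Finset.range (n + 1), (-1 : ℚ) ^ k * (1 / (k + 4)) * (n.choose k) =
      6 / ((n + 1) * (n + 2) * (n + 3) * (n + 4)) := by
  have h := sum_range_neg_one_pow_mul_choose_div_nat_add_one (K := ℚ) n 3
  have hfact : ((n + 3 + 1)! : ℚ) = n ! * ((n + 1) * (n + 2) * (n + 3) * (n + 4)) := by
    push_cast [factorial_succ]
    ring
  have hn : (n ! : ℚ) ≠ 0 := cast_ne_zero.2 n.factorial_ne_zero
  convert h using 1
  · refine sum_congr rfl fun k _ ↦ ?_
    push_cast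
    ring
  · rw [hfact, show (3 ! : ℚ) = 6 by rfl, mul_div_mul_left _ _ hn]
end
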